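/- For the Kindlmann aphid model, the quantity E(t) = a·x(t) − r·h(t) + h(t)²/2 is conserved along solutions; that is, E(t) = a·x₀ for all t. -/

import Mathlib

open Set

theorem eq_of_hasDerivAt_zero_on_Icc {E : Type*} [NormedAddCommGroup E] [NormedSpace ℝ E]
    {f : ℝ → E} {a b : ℝ} (hf : ∀ s ∈ Icc a b, HasDerivAt f 0 s) :
    ∀ t ∈ Icc a b, f t = f a :=
  constant_of_has_deriv_right_zero
    (fun s hs => (hf s hs).continuousAt.continuousWithinAt)
    (fun s hs => (hf s (Ico_subset_Icc_self hs)).hasDerivWithinAt)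

theorem hasDerivAt_kindlmann_energy {a r t : ℝ} {h x : ℝ → ℝ}
    (hh : HasDerivAt h (a * x t) t) (hx : HasDerivAt x ((r - h t) * x t) t) :
    HasDerivAt (fun s => a * x s - r * h s + h s ^ 2 / 2) 0 t := by
  refine (((hx.const_mul a).sub (hh.const_mul r)).add ((hh.pow 2).div_const 2)).congr_deriv ?_
  push_cast
  ring

theorem kindlmann_conserved_general
    (a r x0 T : ℝ)
    (h x : ℝ → ℝ)
    (hh : ∀ t ∈ Set.Icc (0:ℝ) T, HasDerivAt h (a * x t) t)
    (hx : ∀ t ∈ Set.Icc (0:ℝ) T, HasDerivAt x ((r - h t) * x t) t)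
    (hinit : h 0 = 0) (hxinit : x 0 = x0) :
    ∀ t ∈ Set.Icc (0:ℝ) T, a * x t - r * h t + (h t)^2 / 2 = a * x0 := by
  intro t ht
  have hconst := eq_of_hasDerivAt_zero_on_Icc
    (fun s hs => hasDerivAt_kindlmann_energy (hh s hs) (hx s hs)) t ht
  simpa [hinit, hxinit] using hconst

theorem kindlmann_conserved
    (a r x0 T : ℝ) (ha : 0 < a) (hr : 0 < r) (hx0 : 0 < x0) (hT : 0 ≤ T)
    (h x : ℝ → ℝ)
    (hh : ∀ t ∈ Set.Icc (0:ℝ) T, HasDerivAt h (a * x t) t)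
    (hx : ∀ t ∈ Set.Icc (0:ℝ) T, HasDerivAt x ((r - h t) * x t) t)
    (hinit : h 0 = 0) (hxinit : x 0 = x0) :
    ∀ t ∈ Set.Icc (0:ℝ) T, a * x t - r * h t + (h t)^2 / 2 = a * x0 :=
  kindlmann_conserved_general a r x0 T h x hh hx hinit hxinit
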